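/- For every tree T of order n ≥ 3 that is not a path, edim(T ⊙ K_1) = n_1(T), the number of leaves of T. -/

import Mathlib

open SimpleGraph

variable {V W : Type*}

/-- Distance (in `ℕ∞`) from a vertex to an edge: the minimum of the distances
to the two endpoints. -/
noncomputable def edgeDist (G : SimpleGraph V) (v : V) (e : Sym2 V) : ℕ∞ :=
  Sym2.lift ⟨fun a b => min (G.edist v a) (G.edist v b),
    fun a b => min_comm _ _⟩ e

/-- A set of vertices is an edge metric generator if every pair of distinct
edges is distinguished by some vertex of the set. -/
def IsEdgeMetricGenerator (G : SimpleGraph V) (S : Set V) : Prop :=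
  ∀ e₁ ∈ G.edgeSet, ∀ e₂ ∈ G.edgeSet, e₁ ≠ e₂ →
    ∃ w ∈ S, edgeDist G w e₁ ≠ edgeDist G w e₂

/-- The edge metric dimension: minimum cardinality of an edge metric generator. -/
noncomputable def edim (G : SimpleGraph V) : ℕ :=
  sInf {n | ∃ S : Set V, S.ncard = n ∧ IsEdgeMetricGenerator G S}


/-- The join of two graphs: disjoint union plus all edges across. -/
def joinGraph (G : SimpleGraph V) (H : SimpleGraph W) : SimpleGraph (V ⊕ W) where
  Adj x y := match x, y with
    | .inl a, .inl b => G.Adj a b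
    | .inr a, .inr b => H.Adj a b
    | .inl _, .inr _ => True
    | .inr _, .inl _ => True
  symm := by constructor; rintro (a | a) (b | b) h <;> simp_all [SimpleGraph.adj_comm]
  loopless := by
    constructor
    rintro (a | a) h
    · exact G.irrefl h
    · exact H.irrefl h

/-- A total dominating set: every vertex has a neighbor in the set. -/
def IsTotalDomSet (G : SimpleGraph V) (D : Set V) : Prop :=
  ∀ v : V, ∃ d ∈ D, G.Adj v d

/-- The total domination number. -/
noncomputable def totalDomNum (G : SimpleGraph V) : ℕ :=
  sInf {n | ∃ D : Set V, D.ncard = n ∧ IsTotalDomSet G D}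

/-- The class 𝒢: for every vertex `u` there is a neighbor `v`
such that `{u, v}` is a minimum total dominating set. -/
def InClassG (G : SimpleGraph V) : Prop :=
  ∀ u : V, ∃ v : V, G.Adj u v ∧ IsTotalDomSet G {u, v} ∧
    ({u, v} : Set V).ncard = totalDomNum G

/-- Lexicographic product `G[H]`. -/
def lexProd (G : SimpleGraph V) (H : SimpleGraph W) : SimpleGraph (V × W) where
  Adj x y := G.Adj x.1 y.1 ∨ (x.1 = y.1 ∧ H.Adj x.2 y.2)
  symm := by constructor; rintro ⟨g, h⟩ ⟨g', h'⟩ (hadj | ⟨rfl, hadj⟩)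
             · exact Or.inl hadj.symm
             · exact Or.inr ⟨rfl, hadj.symm⟩
  loopless := by constructor; rintro ⟨g, h⟩ (hadj | ⟨-, hadj⟩)
                 · exact G.irrefl hadj
                 · exact H.irrefl hadj

/-- Corona product `G ⊙ H`: vertex `(g, none)` is the vertex `g` of `G`, and
`(g, some h)` is the vertex `h` of the copy of `H` attached to `g`. -/
def corona (G : SimpleGraph V) (H : SimpleGraph W) : SimpleGraph (V × Option W) where
  Adj x y := match x, y with
    | (g, none), (g', none) => G.Adj g g'
    | (g, none), (g', some _) => g = g'
    | (g, some _), (g', none) => g = g'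
    | (g, some h), (g', some h') => g = g' ∧ H.Adj h h'
  symm := by constructor; rintro ⟨g, (_ | h)⟩ ⟨g', (_ | h')⟩ hadj <;>
             simp_all [SimpleGraph.adj_comm, eq_comm]
  loopless := by constructor; rintro ⟨g, (_ | h)⟩ hadj <;> simp_all

/-- The closed neighborhood of a vertex. -/
def closedNbhd (G : SimpleGraph V) (u : V) : Set V :=
  insert u (G.neighborSet u)

/-- `u` and `v` are false twins: equal open neighborhoods. -/
def FalseTwin (G : SimpleGraph V) (u v : V) : Prop :=
  G.neighborSet u = G.neighborSet v

/-- `u` and `v` are true twins: equal closed neighborhoods. -/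
def TrueTwin (G : SimpleGraph V) (u v : V) : Prop :=
  closedNbhd G u = closedNbhd G v

/-- The union of the closed neighborhoods of the two endpoints of an edge. -/
def edgeNbhd (G : SimpleGraph V) : Sym2 V → Set V :=
  Sym2.lift ⟨fun a b => closedNbhd G a ∪ closedNbhd G b, fun _ _ => Set.union_comm _ _⟩

/-- Two edges are twin edges: `N[u] ∪ N[v] = N[x] ∪ N[y]`. -/
def TwinEdges (G : SimpleGraph V) (e f : Sym2 V) : Prop :=
  edgeNbhd G e = edgeNbhd G f

/-- The set of edges lying in nontrivial edge-twin classes. -/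
def nontrivTwinEdges (G : SimpleGraph V) : Set (Sym2 V) :=
  {e ∈ G.edgeSet | ∃ f ∈ G.edgeSet, f ≠ e ∧ TwinEdges G e f}

/-- `q(G)`: the number of edges lying in nontrivial edge-twin classes. -/
noncomputable def qval (G : SimpleGraph V) : ℕ := (nontrivTwinEdges G).ncard

/-- `q'(G) = q(G) - m`, where `m` is the number of nontrivial edge-twin classes. -/
noncomputable def q'val (G : SimpleGraph V) : ℕ :=
  qval G - (edgeNbhd G '' nontrivTwinEdges G).ncard

/-- The set of vertices lying in nontrivial false-twin classes. -/
def nontrivFalseTwins (G : SimpleGraph V) : Set V :=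
  {v | ∃ u, u ≠ v ∧ FalseTwin G u v}

/-- The set of vertices lying in nontrivial true-twin classes. -/
def nontrivTrueTwins (G : SimpleGraph V) : Set V :=
  {v | ∃ u, u ≠ v ∧ TrueTwin G u v}

/-- `f'(G) = f(G) - k`: vertices in nontrivial false-twin classes minus the
number of such classes. -/
noncomputable def f'val (G : SimpleGraph V) : ℕ :=
  (nontrivFalseTwins G).ncard - (G.neighborSet '' nontrivFalseTwins G).ncard

/-- `t'(G) = t(G) - ℓ`: vertices in nontrivial true-twin classes minus the
number of such classes. -/
noncomputable def t'val (G : SimpleGraph V) : ℕ :=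
  (nontrivTrueTwins G).ncard - (closedNbhd G '' nontrivTrueTwins G).ncard

/-- A set of representatives for the twin deletion operation: it contains
exactly one vertex from each (false- or true-) twin equivalence class. -/
def IsTwinDeletionSet (G : SimpleGraph V) (R : Set V) : Prop :=
  ∀ v : V, ∃! r : V, r ∈ R ∧ (FalseTwin G v r ∨ TrueTwin G v r)


/-- A major vertex: degree at least 3. -/
def IsMajor (G : SimpleGraph V) (v : V) : Prop := 3 ≤ (G.neighborSet v).ncard

/-- A leaf: degree exactly 1. -/
def IsLeaf (G : SimpleGraph V) (v : V) : Prop := (G.neighborSet v).ncard = 1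

/-- A leaf `u` is a terminal vertex of a major vertex `v` if `v` is the closest
major vertex to `u`. -/
def IsTerminalOf (G : SimpleGraph V) (u v : V) : Prop :=
  IsLeaf G u ∧ IsMajor G v ∧ ∀ w, IsMajor G w → w ≠ v → G.dist u v < G.dist u w

/-- An exterior major vertex: a major vertex with at least one terminal vertex. -/
def IsExteriorMajor (G : SimpleGraph V) (v : V) : Prop :=
  IsMajor G v ∧ ∃ u, IsTerminalOf G u v

/-- The number of leaves of a graph. -/
noncomputable def numLeaves (G : SimpleGraph V) : ℕ := {v | IsLeaf G v}.ncard

/-- The number of exterior major vertices of a graph. -/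
noncomputable def exMajor (G : SimpleGraph V) : ℕ := {v | IsExteriorMajor G v}.ncard

/-!
The pendant vertices at the leaves of `T` resolve the edges of `T ⊙ K₁`. Every vertex on one side
of a tree edge is strictly closer to the near endpoint than to any vertex on the other side, so
two distinct edges are told apart by a leaf beyond a suitable edge of `T` (one of the two edges,
or the first edge on the way from one pendant edge to the other).

Conversely, let `l` be a leaf with neighbour `s`. A generator contains a vertex over `l` or the
pendant of `s`, since only these see the pendant edge at `s` and the edge `sl` differently; and
for two leaves `l₁`, `l₂` at `s` it contains a vertex over one of them, since only these separate
`sl₁` from `sl₂`. As the neighbour of a leaf is not a leaf once `T` has three vertices, this gives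
an injection from the leaves into any generator.
-/

-- `(g, none)` is the vertex `g` of `T`, and `(g, some 0)` the pendant vertex attached to it.
local notation:max G:max "⊙K₁" => corona G (⊥ : SimpleGraph (Fin 1))

namespace SimpleGraph

variable {G : SimpleGraph V}

lemma edgeDist_mk (G : SimpleGraph V) (v a b : V) :
    edgeDist G v s(a, b) = min (G.edist v a) (G.edist v b) := rfl

lemma edgeDist_mk_self (G : SimpleGraph V) (a v : V) : edgeDist G v s(a, v) = 0 := by
  simp [edgeDist_mk]

lemma Connected.edgeDist_eq (hG : G.Connected) (v a b : V) :
    edgeDist G v s(a, b) = (min (G.dist v a) (G.dist v b) : ℕ) := by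
  rw [edgeDist_mk, ← (hG v a).coe_dist_eq_edist, ← (hG v b).coe_dist_eq_edist,
    Nat.mono_cast.map_min]

lemma Connected.edgeDist_eq_of_dist_eq_add_one (hG : G.Connected) {v a b : V}
    (h : G.dist v b = G.dist v a + 1) : edgeDist G v s(a, b) = G.dist v a := by
  rw [hG.edgeDist_eq, h, min_eq_left (Nat.le_succ _)]

lemma Connected.exists_adj_dist_eq_add_one (hG : G.Connected) {x a : V} (hne : x ≠ a) :
    ∃ c, G.Adj x c ∧ G.dist x a = G.dist c a + 1 := by
  obtain ⟨p, hp⟩ := hG.exists_walk_length_eq_dist x a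
  cases p with
  | nil => exact absurd rfl hne
  | @cons _ c _ h q =>
    have hq := dist_le q
    have htri := hG.dist_triangle (u := x) (v := c) (w := a)
    rw [Walk.length_cons] at hp
    rw [dist_eq_one_iff_adj.mpr h] at htri
    exact ⟨_, h, by omega⟩

lemma Connected.dist_eq_dist_add_one_of_neighborSet_eq_singleton (hG : G.Connected) {p q x : V}
    (hp : G.neighborSet p = {q}) (hx : x ≠ p) : G.dist x p = G.dist x q + 1 := by
  obtain ⟨c, hc, hcx⟩ := hG.exists_adj_dist_eq_add_one hx.symm
  obtain rfl : c = q := by simpa [hp] using show c ∈ G.neighborSet p from hc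
  rwa [dist_comm, dist_comm (u := x)]

lemma IsTree.eq_of_adj_of_dist_eq_add_one (hG : G.IsTree) {x a c c' : V} (hc : G.Adj x c)
    (hc' : G.Adj x c') (hca : G.dist x a = G.dist c a + 1)
    (hc'a : G.dist x a = G.dist c' a + 1) : c = c' := by
  obtain ⟨p, hp⟩ := hG.connected.exists_walk_length_eq_dist c a
  obtain ⟨p', hp'⟩ := hG.connected.exists_walk_length_eq_dist c' a
  have hpath : (Walk.cons hc p).IsPath := Walk.isPath_of_length_eq_dist _ (by simp [hp, hca])
  have hpath' : (Walk.cons hc' p').IsPath := Walk.isPath_of_length_eq_dist _ (by simp [hp', hc'a])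
  have := (hG.isAcyclic.subsingleton_path x a).elim ⟨_, hpath⟩ ⟨_, hpath'⟩
  simpa using congrArg (fun q : G.Path x a => q.1.snd) this

/-- Throughout, `G.dist x u = G.dist x v + 1` says that `x` lies on the `v`-side of the
tree edge `uv`; an edge with one endpoint on each side is `uv` itself. -/
lemma IsTree.eq_and_eq_of_adj_of_dist (hG : G.IsTree) {u v x y : V} (huv : G.Adj u v)
    (hxy : G.Adj x y) (hx : G.dist x u = G.dist x v + 1) (hy : G.dist y v = G.dist y u + 1) :
    x = v ∧ y = u := by
  have hu := hG.dist_eq_dist_add_one_of_adj u hxy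
  have hv := hG.dist_eq_dist_add_one_of_adj v hxy
  simp only [dist_comm (u := u), dist_comm (u := v)] at hu hv
  have hyv : G.dist y v = G.dist x v + 1 := by omega
  have hyu : G.dist y u = 0 := by
    by_contra hyu
    obtain ⟨z, hz, hzu⟩ := hG.connected.exists_adj_dist_eq_add_one
      (fun h : y = u => hyu (h ▸ dist_self))
    have h1 : G.dist z v ≤ G.dist z u + G.dist u v := hG.connected.dist_triangle
    have h2 : G.dist y v ≤ G.dist y z + G.dist z v := hG.connected.dist_triangle
    rw [dist_eq_one_iff_adj.mpr huv] at h1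
    rw [dist_eq_one_iff_adj.mpr hz] at h2
    obtain rfl := hG.eq_of_adj_of_dist_eq_add_one hz hxy.symm (by omega) hyv
    omega
  exact ⟨hG.connected.dist_eq_zero_iff.mp (by omega), hG.connected.dist_eq_zero_iff.mp hyu⟩

lemma IsTree.dist_lt_length_of_adj (hG : G.IsTree) {u v x y : V} (huv : G.Adj u v)
    (p : G.Walk x y) (hx : G.dist x u = G.dist x v + 1) (hy : G.dist y v = G.dist y u + 1) :
    G.dist x v < p.length := by
  induction p with
  | nil => omega
  | @cons x c y h p ih =>
    rw [Walk.length_cons]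
    rcases hG.dist_eq_dist_add_one_of_adj c huv with hc | hc
    · have htri : G.dist x v ≤ G.dist x c + G.dist c v := hG.connected.dist_triangle
      rw [dist_eq_one_iff_adj.mpr h] at htri
      have := ih hc hy
      omega
    · obtain ⟨rfl, -⟩ := hG.eq_and_eq_of_adj_of_dist huv h hx hc
      simp

lemma IsTree.dist_lt_dist_of_adj (hG : G.IsTree) {u v x y : V} (huv : G.Adj u v)
    (hx : G.dist x u = G.dist x v + 1) (hy : G.dist y v = G.dist y u + 1) :
    G.dist x v < G.dist x y := by
  obtain ⟨p, hp⟩ := hG.connected.exists_walk_length_eq_dist x y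
  exact hp ▸ hG.dist_lt_length_of_adj huv p hx hy

/-- A vertex farthest from `a` among those on the `b`-side of the edge `ab` is a leaf. -/
lemma IsTree.exists_isLeaf_dist_eq_add_one [Finite V] (hG : G.IsTree) {a b : V}
    (hab : G.Adj a b) : ∃ l, IsLeaf G l ∧ G.dist l a = G.dist l b + 1 := by
  set B := {x | G.dist x a = G.dist x b + 1}
  have hbB : b ∈ B := by simp [B, dist_eq_one_iff_adj.mpr hab.symm]
  obtain ⟨l, hlB, hmax⟩ := B.exists_max_image (G.dist · a) B.toFinite ⟨b, hbB⟩
  have hla : l ≠ a := by rintro rfl; simp [B] at hlB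
  obtain ⟨c, hc, hlc⟩ := hG.connected.exists_adj_dist_eq_add_one hla
  refine ⟨l, ?_, hlB⟩
  suffices G.neighborSet l = {c} by simp [IsLeaf, this]
  ext c'
  refine ⟨fun hc' => ?_, fun h => (Set.mem_singleton_iff.mp h) ▸ hc⟩
  rcases hG.dist_eq_dist_add_one_of_adj a hc' with h | h <;>
    simp only [dist_comm (u := a)] at h
  · exact (hG.eq_of_adj_of_dist_eq_add_one hc hc' hlc h).symm
  · have h1 : G.dist c' b ≤ G.dist c' l + G.dist l b := hG.connected.dist_triangle
    have h2 : G.dist c' a ≤ G.dist c' b + G.dist b a := hG.connected.dist_triangle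
    rw [dist_eq_one_iff_adj.mpr hc'.symm] at h1
    rw [dist_eq_one_iff_adj.mpr hab.symm] at h2
    have hlB' : G.dist l a = G.dist l b + 1 := hlB
    have := hmax c' (show G.dist c' a = G.dist c' b + 1 by omega)
    omega

lemma Connected.not_isLeaf_of_neighborSet_eq_singleton [Fintype V] (hG : G.Connected)
    (h3 : 3 ≤ Fintype.card V) {l s : V} (hl : G.neighborSet l = {s}) : ¬ IsLeaf G s := by
  classical
  intro hs
  obtain ⟨t, ht⟩ := Set.ncard_eq_one.mp hs
  have hls : G.Adj l s := (mem_neighborSet ..).mp (hl ▸ rfl)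
  obtain rfl : l = t := by simpa [ht] using (mem_neighborSet ..).mpr hls.symm
  obtain ⟨x, -, hx⟩ := Finset.exists_mem_notMem_of_card_lt_card
    (s := {l, s}) (t := Finset.univ) ((Finset.card_le_two).trans_lt h3)
  simp only [Finset.mem_insert, Finset.mem_singleton, not_or] at hx
  have h1 := hG.dist_eq_dist_add_one_of_neighborSet_eq_singleton hl hx.1
  have h2 := hG.dist_eq_dist_add_one_of_neighborSet_eq_singleton ht hx.2
  omega

end SimpleGraph

lemma edim_eq_ncard_of_isEdgeMetricGenerator {G : SimpleGraph V} {S : Set V}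
    (hS : IsEdgeMetricGenerator G S)
    (hmin : ∀ S', IsEdgeMetricGenerator G S' → S.ncard ≤ S'.ncard) : edim G = S.ncard :=
  le_antisymm (Nat.sInf_le ⟨S, rfl, hS⟩)
    (le_csInf ⟨_, S, rfl, hS⟩ fun _ ⟨S', hS'n, hS'⟩ => hS'n ▸ hmin S' hS')

variable {T : SimpleGraph V}

@[simp]
lemma corona_adj_inner_inner {a b : V} : (T⊙K₁).Adj (a, none) (b, none) ↔ T.Adj a b := Iff.rfl

@[simp]
lemma corona_adj_inner_pendant {a b : V} {i : Fin 1} :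
    (T⊙K₁).Adj (a, none) (b, some i) ↔ a = b := Iff.rfl

lemma corona_neighborSet_pendant (T : SimpleGraph V) (g : V) :
    (T⊙K₁).neighborSet (g, some 0) = {(g, none)} := by
  ext ⟨a, _ | i⟩
  · simp [corona, eq_comm]
  · simp [corona]

lemma corona_edge_cases {e : Sym2 (V × Option (Fin 1))} (he : e ∈ (T⊙K₁).edgeSet) :
    (∃ a b, T.Adj a b ∧ e = s((a, none), (b, none))) ∨
      ∃ g, e = s((g, none), (g, some 0)) := by
  induction e using Sym2.ind with
  | _ x y =>
  rw [mem_edgeSet] at he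
  rcases x with ⟨a, _ | i⟩ <;> rcases y with ⟨b, _ | j⟩
  · exact .inl ⟨a, b, he, rfl⟩
  · obtain ⟨rfl, rfl⟩ : a = b ∧ j = 0 := ⟨he, Fin.fin_one_eq_zero j⟩
    exact .inr ⟨a, rfl⟩
  · obtain ⟨rfl, rfl⟩ : a = b ∧ i = 0 := ⟨he, Fin.fin_one_eq_zero i⟩
    exact .inr ⟨a, Sym2.eq_swap⟩
  · exact absurd he.2 (by simp)

lemma corona_dist_fst_le_length (hT : T.Connected) {x y : V × Option (Fin 1)}
    (p : (T⊙K₁).Walk x y) : T.dist x.1 y.1 ≤ p.length := by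
  induction p with
  | nil => simp
  | @cons x z y h p ih =>
    have htri := hT.dist_triangle (u := x.1) (v := z.1) (w := y.1)
    have hxz : T.dist x.1 z.1 ≤ 1 := by
      rcases x with ⟨a, _ | i⟩ <;> rcases z with ⟨b, _ | j⟩ <;> simp [corona] at h
      · exact (dist_eq_one_iff_adj.mpr h).le
      all_goals simp [h]
    rw [Walk.length_cons]
    omega

def coronaInnerHom (T : SimpleGraph V) : T →g T⊙K₁ := ⟨fun a => (a, none), id⟩

lemma corona_connected (hT : T.Connected) : (T⊙K₁).Connected := by
  have hinner : ∀ x : V × Option (Fin 1), (T⊙K₁).Reachable (x.1, none) x := by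
    rintro ⟨a, _ | i⟩
    · rfl
    · exact Adj.reachable (by simp)
  have := hT.nonempty
  refine .mk fun x y => ((hinner x).symm.trans ?_).trans (hinner y)
  exact (hT x.1 y.1).map (coronaInnerHom T)

lemma corona_dist_inner_inner (hT : T.Connected) (a b : V) :
    (T⊙K₁).dist (a, none) (b, none) = T.dist a b := by
  obtain ⟨p, hp⟩ := hT.exists_walk_length_eq_dist a b
  obtain ⟨q, hq⟩ := (corona_connected hT).exists_walk_length_eq_dist (a, none) (b, none)
  have h1 : (T⊙K₁).dist (a, none) (b, none) ≤ p.length :=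
    (dist_le (p.map (coronaInnerHom T))).trans_eq (Walk.length_map _ _)
  have h2 := corona_dist_fst_le_length hT q
  simp only at h2
  omega

lemma corona_dist_pendant (hT : T.Connected) {g : V} {x : V × Option (Fin 1)}
    (hx : x ≠ (g, some 0)) : (T⊙K₁).dist x (g, some 0) = (T⊙K₁).dist x (g, none) + 1 :=
  (corona_connected hT).dist_eq_dist_add_one_of_neighborSet_eq_singleton
    (corona_neighborSet_pendant T g) hx

lemma corona_dist_pendant_inner (hT : T.Connected) (g a : V) :
    (T⊙K₁).dist (g, some 0) (a, none) = T.dist g a + 1 := by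
  rw [dist_comm, corona_dist_pendant hT (by simp), dist_comm, corona_dist_inner_inner hT]

lemma corona_edgeDist_pendant_inner_edge (hT : T.Connected) (l a b : V) :
    edgeDist (T⊙K₁) (l, some 0) s((a, none), (b, none)) =
      (min (T.dist l a) (T.dist l b) + 1 : ℕ) := by
  rw [(corona_connected hT).edgeDist_eq, corona_dist_pendant_inner hT,
    corona_dist_pendant_inner hT, Nat.add_min_add_right]

lemma corona_edgeDist_pendant_pendant_edge (hT : T.Connected) {l g : V} (h : l ≠ g) :
    edgeDist (T⊙K₁) (l, some 0) s((g, none), (g, some 0)) = (T.dist l g + 1 : ℕ) := by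
  rw [(corona_connected hT).edgeDist_eq_of_dist_eq_add_one
    (corona_dist_pendant hT (by simpa using h)), corona_dist_pendant_inner hT]

lemma corona_dist_leaf (hT : T.Connected) {l s : V} (hl : T.neighborSet l = {s})
    {w : V × Option (Fin 1)} (hw : w.1 ≠ l) :
    (T⊙K₁).dist w (l, none) = (T⊙K₁).dist w (s, none) + 1 := by
  have hleaf := hT.dist_eq_dist_add_one_of_neighborSet_eq_singleton hl hw
  rcases w with ⟨g, _ | i⟩
  · simpa [corona_dist_inner_inner hT] using hleaf
  · obtain rfl := Fin.fin_one_eq_zero i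
    simpa [corona_dist_pendant_inner hT] using hleaf

def leafPendants (T : SimpleGraph V) : Set (V × Option (Fin 1)) :=
  (fun l => (l, some 0)) '' {l | IsLeaf T l}

lemma ncard_leafPendants (T : SimpleGraph V) : (leafPendants T).ncard = numLeaves T :=
  Set.ncard_image_of_injective _ (Prod.mk_left_injective _)

lemma exists_mem_leafPendants_edgeDist_ne_of_adj_of_adj [Finite V] (hT : T.IsTree)
    {a b c d : V} (hab : T.Adj a b) (hcd : T.Adj c d)
    (hne : s((a, none), (b, none)) ≠ (s((c, none), (d, none)) : Sym2 (V × Option (Fin 1)))) :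
    ∃ w ∈ leafPendants T,
      edgeDist (T⊙K₁) w s((a, none), (b, none)) ≠
        edgeDist (T⊙K₁) w s((c, none), (d, none)) := by
  wlog ha : T.dist a d = T.dist a c + 1 generalizing c d
  · have ha' := (hT.dist_eq_dist_add_one_of_adj a hcd).resolve_right ha
    simpa only [Sym2.eq_swap (a := (d, none))] using
      this hcd.symm (by rwa [Sym2.eq_swap (a := (d, none))]) ha'
  have hb : T.dist b d = T.dist b c + 1 := by
    refine (hT.dist_eq_dist_add_one_of_adj b hcd).resolve_left fun hb => hne ?_
    obtain ⟨rfl, rfl⟩ := hT.eq_and_eq_of_adj_of_dist hcd.symm hab ha hb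
    rfl
  obtain ⟨l, hl, hlc⟩ := hT.exists_isLeaf_dist_eq_add_one hcd
  have hla := hT.dist_lt_dist_of_adj hcd hlc ha
  have hlb := hT.dist_lt_dist_of_adj hcd hlc hb
  refine ⟨_, ⟨l, hl, rfl⟩, ?_⟩
  rw [corona_edgeDist_pendant_inner_edge hT.connected,
    corona_edgeDist_pendant_inner_edge hT.connected, Ne, Nat.cast_inj]
  omega

lemma exists_mem_leafPendants_edgeDist_ne_of_adj [Finite V] (hT : T.IsTree) {a b : V}
    (hab : T.Adj a b) (g : V) :
    ∃ w ∈ leafPendants T,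
      edgeDist (T⊙K₁) w s((a, none), (b, none)) ≠
        edgeDist (T⊙K₁) w s((g, none), (g, some 0)) := by
  wlog hg : T.dist g a = T.dist g b + 1 generalizing a b
  · simpa only [Sym2.eq_swap (a := (b, none))] using
      this hab.symm ((hT.dist_eq_dist_add_one_of_adj g hab).resolve_left hg)
  obtain ⟨l, hl, hlb⟩ := hT.exists_isLeaf_dist_eq_add_one hab.symm
  have hlg := hT.dist_lt_dist_of_adj hab.symm hlb hg
  have hne : l ≠ g := by rintro rfl; simp at hlg
  refine ⟨_, ⟨l, hl, rfl⟩, ?_⟩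
  rw [corona_edgeDist_pendant_inner_edge hT.connected,
    corona_edgeDist_pendant_pendant_edge hT.connected hne, Ne, Nat.cast_inj]
  omega

lemma exists_mem_leafPendants_edgeDist_ne_of_ne [Finite V] (hT : T.IsTree) {g g' : V}
    (hgg' : g ≠ g') :
    ∃ w ∈ leafPendants T, edgeDist (T⊙K₁) w s((g, none), (g, some 0)) ≠
      edgeDist (T⊙K₁) w s((g', none), (g', some 0)) := by
  obtain ⟨c, hc, hgc⟩ := hT.connected.exists_adj_dist_eq_add_one hgg'
  obtain ⟨l, hl, hlc⟩ := hT.exists_isLeaf_dist_eq_add_one hc.symm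
  have hlg' := hT.dist_lt_dist_of_adj hc.symm hlc (by rwa [dist_comm, dist_comm (u := g')])
  have hne' : l ≠ g' := by rintro rfl; simp at hlg'
  refine ⟨_, ⟨l, hl, rfl⟩, ?_⟩
  rw [corona_edgeDist_pendant_pendant_edge hT.connected hne']
  by_cases hlg : l = g
  · subst hlg
    rw [edgeDist_mk_self]
    exact (Nat.cast_add_one_ne_zero _).symm
  · rw [corona_edgeDist_pendant_pendant_edge hT.connected hlg, Ne, Nat.cast_inj]
    omega

theorem isEdgeMetricGenerator_leafPendants [Finite V] (hT : T.IsTree) :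
    IsEdgeMetricGenerator (T⊙K₁) (leafPendants T) := by
  intro e₁ he₁ e₂ he₂ hne
  rcases corona_edge_cases he₁ with ⟨a, b, hab, rfl⟩ | ⟨g, rfl⟩ <;>
    rcases corona_edge_cases he₂ with ⟨c, d, hcd, rfl⟩ | ⟨g', rfl⟩
  · exact exists_mem_leafPendants_edgeDist_ne_of_adj_of_adj hT hab hcd hne
  · exact exists_mem_leafPendants_edgeDist_ne_of_adj hT hab g'
  · obtain ⟨w, hw, h⟩ := exists_mem_leafPendants_edgeDist_ne_of_adj hT hcd g
    exact ⟨w, hw, h.symm⟩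
  · exact exists_mem_leafPendants_edgeDist_ne_of_ne hT fun h => hne (h ▸ rfl)

lemma IsEdgeMetricGenerator.exists_mem_fst_eq_or_eq_pendant (hT : T.Connected)
    {S : Set (V × Option (Fin 1))} (hS : IsEdgeMetricGenerator (T⊙K₁) S) {l s : V}
    (hl : T.neighborSet l = {s}) : ∃ w ∈ S, w.1 = l ∨ w = (s, some 0) := by
  have hsl : T.Adj s l := ((mem_neighborSet ..).mp (hl ▸ rfl) : T.Adj l s).symm
  obtain ⟨w, hwS, hw⟩ := hS s((s, none), (s, some 0)) (by simp)
    s((s, none), (l, none)) (by simpa using hsl) (by simp)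
  refine ⟨w, hwS, ?_⟩
  by_contra! h
  apply hw
  rw [(corona_connected hT).edgeDist_eq_of_dist_eq_add_one (corona_dist_pendant hT h.2),
    (corona_connected hT).edgeDist_eq_of_dist_eq_add_one (corona_dist_leaf hT hl h.1)]

lemma IsEdgeMetricGenerator.exists_mem_fst_eq_of_neighborSet_eq (hT : T.Connected)
    {S : Set (V × Option (Fin 1))} (hS : IsEdgeMetricGenerator (T⊙K₁) S) {l₁ l₂ s : V}
    (hne : l₁ ≠ l₂) (hl₁ : T.neighborSet l₁ = {s}) (hl₂ : T.neighborSet l₂ = {s}) :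
    ∃ w ∈ S, w.1 = l₁ ∨ w.1 = l₂ := by
  have hsl₁ : T.Adj s l₁ := ((mem_neighborSet ..).mp (hl₁ ▸ rfl) : T.Adj l₁ s).symm
  have hsl₂ : T.Adj s l₂ := ((mem_neighborSet ..).mp (hl₂ ▸ rfl) : T.Adj l₂ s).symm
  obtain ⟨w, hwS, hw⟩ := hS s((s, none), (l₁, none)) (by simpa using hsl₁)
    s((s, none), (l₂, none)) (by simpa using hsl₂) (by simp [hne, hsl₂.ne])
  refine ⟨w, hwS, ?_⟩
  by_contra! h
  apply hw
  rw [(corona_connected hT).edgeDist_eq_of_dist_eq_add_one (corona_dist_leaf hT hl₁ h.1),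
    (corona_connected hT).edgeDist_eq_of_dist_eq_add_one (corona_dist_leaf hT hl₂ h.2)]

theorem numLeaves_le_ncard_of_isEdgeMetricGenerator [Fintype V] (hT : T.Connected)
    (h3 : 3 ≤ Fintype.card V) {S : Set (V × Option (Fin 1))}
    (hS : IsEdgeMetricGenerator (T⊙K₁) S) : numLeaves T ≤ S.ncard := by
  have key : ∀ l, IsLeaf T l → ∃ w ∈ S, w.1 = l ∨
      ∃ s, T.neighborSet l = {s} ∧ w = (s, some 0) ∧ ∀ w' ∈ S, w'.1 ≠ l := by
    intro l hl
    obtain ⟨s, hs⟩ := Set.ncard_eq_one.mp hl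
    by_cases h : ∀ w ∈ S, w.1 ≠ l
    · obtain ⟨w, hwS, hw | rfl⟩ := hS.exists_mem_fst_eq_or_eq_pendant hT hs
      · exact absurd hw (h w hwS)
      · exact ⟨_, hwS, .inr ⟨s, hs, rfl, h⟩⟩
    · simp only [not_forall, not_not] at h
      obtain ⟨w, hwS, hw⟩ := h
      exact ⟨w, hwS, .inl hw⟩
  choose! f hfS hf using key
  refine Set.ncard_le_ncard_of_injOn f hfS ?_ S.toFinite
  intro l₁ hl₁ l₂ hl₂ heq
  by_contra hne
  rcases hf l₁ hl₁ with h₁ | ⟨s₁, hs₁, h₁, hS₁⟩ <;>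
    rcases hf l₂ hl₂ with h₂ | ⟨s₂, hs₂, h₂, hS₂⟩
  · exact hne (h₁.symm.trans (heq ▸ h₂))
  · have : s₂ = l₁ := by rw [← h₁, heq, h₂]
    exact hT.not_isLeaf_of_neighborSet_eq_singleton h3 hs₂ (this ▸ hl₁)
  · have : s₁ = l₂ := by rw [← h₂, ← heq, h₁]
    exact hT.not_isLeaf_of_neighborSet_eq_singleton h3 hs₁ (this ▸ hl₂)
  · obtain rfl : s₁ = s₂ := by simpa [h₁, h₂] using heq
    obtain ⟨w, hwS, hw⟩ := hS.exists_mem_fst_eq_of_neighborSet_eq hT hne hs₁ hs₂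
    exact hw.elim (hS₁ w hwS) (hS₂ w hwS)

theorem edim_corona_tree_eq_numLeaves_general {V : Type*} [Fintype V] (T : SimpleGraph V)
    (hconn : T.Connected) (hac : T.IsAcyclic) (h3 : 3 ≤ Fintype.card V) :
    edim (corona T (⊥ : SimpleGraph (Fin 1))) = numLeaves T := by
  rw [← ncard_leafPendants]
  refine edim_eq_ncard_of_isEdgeMetricGenerator
    (isEdgeMetricGenerator_leafPendants ⟨hconn, hac⟩) fun S hS => ?_
  rw [ncard_leafPendants]
  exact numLeaves_le_ncard_of_isEdgeMetricGenerator hconn h3 hS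

theorem edim_corona_tree_eq_numLeaves {V : Type*} [Fintype V] (T : SimpleGraph V)
    (hconn : T.Connected) (hac : T.IsAcyclic) (h3 : 3 ≤ Fintype.card V)
    (hnp : ¬ ∃ n : ℕ, Nonempty (T ≃g pathGraph n)) :
    edim (corona T (⊥ : SimpleGraph (Fin 1))) = numLeaves T :=
  edim_corona_tree_eq_numLeaves_general T hconn hac h3
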